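/- Soundness and strong completeness of SLEA over all frames: for every set Γ of LEA-formulas and every LEA-formula φ, the formula φ is derivable from Γ in SLEA if and only if φ is a semantic consequence of Γ over the class of all models (i.e., for every model M and world s, if M,s ⊨ γ for all γ ∈ Γ, then M,s ⊨ φ). -/

import Mathlib

/-- The language LEA of essence and accident. -/
inductive LEAForm : Type
  | atom : ℕ → LEAForm
  | neg : LEAForm → LEAForm
  | and : LEAForm → LEAForm → LEAForm
  | ess : LEAForm → LEAForm

/-- A Kripke model (the frame is (W, R)). -/
structure Model (W : Type) where
  R : W → W → Prop
  V : ℕ → W → Prop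

/-- Satisfaction for LEA. -/
def satLEA {W : Type} (M : Model W) : W → LEAForm → Prop
  | w, .atom p => M.V p w
  | w, .neg φ => ¬ satLEA M w φ
  | w, .and φ ψ => satLEA M w φ ∧ satLEA M w ψ
  | w, .ess φ => satLEA M w φ → ∀ v, M.R w v → satLEA M v φ

/-- Implication, defined as usual. -/
def impF (φ ψ : LEAForm) : LEAForm := .neg (.and φ (.neg ψ))
/-- ⊤, defined as usual. -/
def topL : LEAForm := .neg (.and (.atom 0) (.neg (.atom 0)))

/-- Uniform substitution of formulas for propositional variables. -/
def substL (σ : ℕ → LEAForm) : LEAForm → LEAForm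
  | .atom p => σ p
  | .neg φ => .neg (substL σ φ)
  | .and φ ψ => .and (substL σ φ) (substL σ ψ)
  | .ess φ => .ess (substL σ φ)

/-- φ is a propositional tautology: it evaluates to true under every boolean
valuation of LEA-formulas that respects negation and conjunction. -/
def isTaut (φ : LEAForm) : Prop :=
  ∀ v : LEAForm → Bool,
    (∀ ψ, v (.neg ψ) = !(v ψ)) →
    (∀ ψ χ, v (.and ψ χ) = (v ψ && v χ)) →
    v φ = true

/-- Theorems of the system SLEA (optionally extended by the axioms in
`extra`): all propositional tautologies, the axioms ∘⊤, ¬p → ∘p and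
(∘p ∧ ∘q) → ∘(p∧q), closed under uniform substitution, modus ponens, and
the rule R: from φ → ψ infer (∘φ ∧ φ) → ∘ψ. -/
inductive SLEAthm (extra : Set LEAForm) : LEAForm → Prop
  | taut {φ} : isTaut φ → SLEAthm extra φ
  | axTop : SLEAthm extra (.ess topL)
  | axEqui : SLEAthm extra (impF (.neg (.atom 0)) (.ess (.atom 0)))
  | axCon : SLEAthm extra
      (impF (.and (.ess (.atom 0)) (.ess (.atom 1)))
        (.ess (.and (.atom 0) (.atom 1))))
  | axExtra {φ} : φ ∈ extra → SLEAthm extra φ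
  | sub {φ} (σ : ℕ → LEAForm) : SLEAthm extra φ → SLEAthm extra (substL σ φ)
  | mp {φ ψ} : SLEAthm extra (impF φ ψ) → SLEAthm extra φ → SLEAthm extra ψ
  | ruleR {φ ψ} : SLEAthm extra (impF φ ψ) →
      SLEAthm extra (impF (.and (.ess φ) φ) (.ess ψ))

/-- Derivability of φ from a set Γ of premises in SLEA (+ `extra`). -/
inductive SLEAderiv (extra : Set LEAForm) (Γ : Set LEAForm) : LEAForm → Prop
  | thm {φ} : SLEAthm extra φ → SLEAderiv extra Γ φ
  | hyp {φ} : φ ∈ Γ → SLEAderiv extra Γ φ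
  | mp {φ ψ} : SLEAderiv extra Γ (impF φ ψ) → SLEAderiv extra Γ φ →
      SLEAderiv extra Γ ψ

/-!
Soundness is a routine induction on derivations. For completeness one builds the canonical model,
in which a maximal consistent set `Δ` sees `Θ` when every `ψ` with `∘ψ ∈ Δ` and `ψ ∈ Δ` lies
in `Θ`. The formulas `ψ` with `∘ψ, ψ ∈ Δ` contain `⊤` and are closed under `∧` (axioms `∘⊤` and
`(∘p ∧ ∘q) → ∘(p ∧ q)`), so whatever is derivable from them is implied by a single one of them,
`C`; rule R turns `⊢ C → φ` into `∘φ ∈ Δ`. Hence `∘φ ∉ Δ` yields a successor omitting `φ`, while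
`φ ∈ Δ` by the axiom `¬p → ∘p`: this is the modal step of the truth lemma.
-/

section Tautologies

variable (φ ψ χ : LEAForm)

theorem isTaut_topL : isTaut topL := by
  intro v hn ha
  simp only [topL, hn, ha]
  cases v (.atom 0) <;> rfl

theorem isTaut_imp_self : isTaut (impF φ φ) := by
  intro v hn ha
  simp only [impF, hn, ha]
  cases v φ <;> rfl

theorem isTaut_imp_imp_left : isTaut (impF ψ (impF φ ψ)) := by
  intro v hn ha
  simp only [impF, hn, ha]
  cases v φ <;> cases v ψ <;> rfl

theorem isTaut_imp_imp_distrib :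
    isTaut (impF (impF φ (impF χ ψ)) (impF (impF φ χ) (impF φ ψ))) := by
  intro v hn ha
  simp only [impF, hn, ha]
  cases v φ <;> cases v χ <;> cases v ψ <;> rfl

theorem isTaut_imp_neg_imp : isTaut (impF φ (impF (.neg φ) ψ)) := by
  intro v hn ha
  simp only [impF, hn, ha]
  cases v φ <;> cases v ψ <;> rfl

theorem isTaut_by_cases : isTaut (impF (impF ψ φ) (impF (impF (.neg ψ) φ) φ)) := by
  intro v hn ha
  simp only [impF, hn, ha]
  cases v φ <;> cases v ψ <;> rfl

theorem isTaut_and_intro : isTaut (impF φ (impF ψ (.and φ ψ))) := by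
  intro v hn ha
  simp only [impF, hn, ha]
  cases v φ <;> cases v ψ <;> rfl

theorem isTaut_and_left : isTaut (impF (.and φ ψ) φ) := by
  intro v hn ha
  simp only [impF, hn, ha]
  cases v φ <;> cases v ψ <;> rfl

theorem isTaut_and_right : isTaut (impF (.and φ ψ) ψ) := by
  intro v hn ha
  simp only [impF, hn, ha]
  cases v φ <;> cases v ψ <;> rfl

theorem isTaut_and_imp_of_imp_of_imp (α β : LEAForm) :
    isTaut (impF (impF α (impF φ ψ)) (impF (impF β φ) (impF (.and α β) ψ))) := by
  intro v hn ha
  simp only [impF, hn, ha]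
  cases v α <;> cases v β <;> cases v φ <;> cases v ψ <;> rfl

end Tautologies

theorem SLEAthm.equi (X : Set LEAForm) (φ : LEAForm) :
    SLEAthm X (impF (.neg φ) (.ess φ)) := by
  simpa [substL, impF] using SLEAthm.sub (extra := X) (fun _ => φ) .axEqui

theorem SLEAthm.con (X : Set LEAForm) (φ ψ : LEAForm) :
    SLEAthm X (impF (.and (.ess φ) (.ess ψ)) (.ess (.and φ ψ))) := by
  simpa [substL, impF] using
    SLEAthm.sub (extra := X) (fun n => if n = 0 then φ else ψ) .axCon

section Derivations

variable {X Γ Δ : Set LEAForm} {φ ψ : LEAForm}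

theorem SLEAderiv.of_isTaut (h : isTaut φ) : SLEAderiv X Γ φ := .thm (.taut h)

theorem SLEAderiv.mono (hΓΔ : Γ ⊆ Δ) (h : SLEAderiv X Γ φ) : SLEAderiv X Δ φ := by
  induction h with
  | thm h => exact .thm h
  | hyp h => exact .hyp (hΓΔ h)
  | mp _ _ ih₁ ih₂ => exact .mp ih₁ ih₂

theorem SLEAderiv.imp_of_insert (h : SLEAderiv X (insert φ Γ) ψ) :
    SLEAderiv X Γ (impF φ ψ) := by
  induction h with
  | thm h => exact .mp (.of_isTaut (isTaut_imp_imp_left φ _)) (.thm h)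
  | hyp h =>
    rcases h with rfl | h
    · exact .of_isTaut (isTaut_imp_self _)
    · exact .mp (.of_isTaut (isTaut_imp_imp_left φ _)) (.hyp h)
  | mp _ _ ih₁ ih₂ => exact .mp (.mp (.of_isTaut (isTaut_imp_imp_distrib _ _ _)) ih₁) ih₂

theorem SLEAderiv.exists_mem_of_sUnion {c : Set (Set LEAForm)} (hc : IsChain (· ⊆ ·) c)
    (hne : c.Nonempty) (h : SLEAderiv X (⋃₀ c) φ) : ∃ Γ ∈ c, SLEAderiv X Γ φ := by
  induction h with
  | thm h => exact ⟨hne.some, hne.some_mem, .thm h⟩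
  | hyp h =>
    obtain ⟨Γ, hΓ, hφ⟩ := h
    exact ⟨Γ, hΓ, .hyp hφ⟩
  | mp _ _ ih₁ ih₂ =>
    obtain ⟨Γ₁, hΓ₁, h₁⟩ := ih₁
    obtain ⟨Γ₂, hΓ₂, h₂⟩ := ih₂
    rcases hc.total hΓ₁ hΓ₂ with h₁₂ | h₂₁
    · exact ⟨Γ₂, hΓ₂, .mp (h₁.mono h₁₂) h₂⟩
    · exact ⟨Γ₁, hΓ₁, .mp h₁ (h₂.mono h₂₁)⟩

theorem SLEAderiv.exists_thm_imp (h : SLEAderiv X Γ φ) (htop : topL ∈ Γ)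
    (hand : ∀ α ∈ Γ, ∀ β ∈ Γ, .and α β ∈ Γ) :
    ∃ C ∈ Γ, SLEAthm X (impF C φ) := by
  induction h with
  | thm h => exact ⟨topL, htop, .mp (.taut (isTaut_imp_imp_left _ _)) h⟩
  | hyp h => exact ⟨_, h, .taut (isTaut_imp_self _)⟩
  | mp _ _ ih₁ ih₂ =>
    obtain ⟨α, hα, h₁⟩ := ih₁
    obtain ⟨β, hβ, h₂⟩ := ih₂
    exact ⟨.and α β, hand α hα β hβ,
      .mp (.mp (.taut (isTaut_and_imp_of_imp_of_imp _ _ α β)) h₁) h₂⟩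

end Derivations

/-- Maximal consistent sets: consistency is the forward direction of `neg_mem_iff`, maximality
the backward one. -/
structure IsMaximalConsistent (X Δ : Set LEAForm) : Prop where
  mem_of_derives : ∀ {φ}, SLEAderiv X Δ φ → φ ∈ Δ
  neg_mem_iff : ∀ φ, LEAForm.neg φ ∈ Δ ↔ φ ∉ Δ

namespace IsMaximalConsistent

variable {X Δ : Set LEAForm} (hΔ : IsMaximalConsistent X Δ) {φ ψ : LEAForm}
include hΔ

theorem thm_mem (h : SLEAthm X φ) : φ ∈ Δ := hΔ.mem_of_derives (.thm h)

theorem mem_of_imp_mem (himp : impF φ ψ ∈ Δ) (hφ : φ ∈ Δ) : ψ ∈ Δ :=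
  hΔ.mem_of_derives (.mp (.hyp himp) (.hyp hφ))

theorem and_mem_iff : LEAForm.and φ ψ ∈ Δ ↔ φ ∈ Δ ∧ ψ ∈ Δ :=
  ⟨fun h => ⟨hΔ.mem_of_imp_mem (hΔ.thm_mem (.taut (isTaut_and_left φ ψ))) h,
      hΔ.mem_of_imp_mem (hΔ.thm_mem (.taut (isTaut_and_right φ ψ))) h⟩,
    fun ⟨hφ, hψ⟩ => hΔ.mem_of_derives
      (.mp (.mp (.of_isTaut (isTaut_and_intro φ ψ)) (.hyp hφ)) (.hyp hψ))⟩

end IsMaximalConsistent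

theorem isMaximalConsistent_of_maximal {X Δ : Set LEAForm} {φ : LEAForm}
    (hmax : Maximal (fun Δ => ¬ SLEAderiv X Δ φ) Δ) : IsMaximalConsistent X Δ := by
  have hΔ : ¬ SLEAderiv X Δ φ := hmax.prop
  have imp_of_not_mem (ψ : LEAForm) (hψ : ψ ∉ Δ) : SLEAderiv X Δ (impF ψ φ) :=
    .imp_of_insert <| by_contra fun hins => hψ (hmax.mem_of_prop_insert hins)
  refine ⟨fun {ψ} hψ => by_contra fun hnψ => hΔ (.mp (imp_of_not_mem ψ hnψ) hψ), fun ψ => ?_⟩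
  refine ⟨fun hnψ hψ => hΔ ?_, fun hψ => by_contra fun hnψ => hΔ ?_⟩
  · exact .mp (.mp (.of_isTaut (isTaut_imp_neg_imp ψ φ)) (.hyp hψ)) (.hyp hnψ)
  · exact .mp (.mp (.of_isTaut (isTaut_by_cases φ ψ)) (imp_of_not_mem ψ hψ))
      (imp_of_not_mem _ hnψ)

theorem exists_isMaximalConsistent_of_not_derives {X Γ : Set LEAForm} {φ : LEAForm}
    (h : ¬ SLEAderiv X Γ φ) : ∃ Δ, Γ ⊆ Δ ∧ IsMaximalConsistent X Δ ∧ φ ∉ Δ := by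
  obtain ⟨Δ, hΓΔ, hmax⟩ := zorn_subset_nonempty {Δ | ¬ SLEAderiv X Δ φ}
    (fun c hcS hc hne => ⟨⋃₀ c, fun hφ => by
        obtain ⟨Γ, hΓ, hφ⟩ := SLEAderiv.exists_mem_of_sUnion hc hne hφ
        exact hcS hΓ hφ,
      fun _ => Set.subset_sUnion_of_mem⟩) Γ h
  exact ⟨Δ, hΓΔ, isMaximalConsistent_of_maximal hmax, fun hφ => hmax.prop (.hyp hφ)⟩

section Canonical

variable (X : Set LEAForm)

def canonicalModel : Model {Δ : Set LEAForm // IsMaximalConsistent X Δ} where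
  R Δ Θ := ∀ ψ, .ess ψ ∈ Δ.1 → ψ ∈ Δ.1 → ψ ∈ Θ.1
  V p Δ := .atom p ∈ Δ.1

variable {X}

theorem exists_canonicalModel_R_not_mem {Δ : {Δ // IsMaximalConsistent X Δ}} {φ : LEAForm}
    (h : .ess φ ∉ Δ.1) : φ ∈ Δ.1 ∧ ∃ Θ, (canonicalModel X).R Δ Θ ∧ φ ∉ Θ.1 := by
  obtain ⟨Δ, hΔ⟩ := Δ
  have hφ : φ ∈ Δ := by_contra fun hφ =>
    h (hΔ.mem_of_imp_mem (hΔ.thm_mem (.equi X φ)) ((hΔ.neg_mem_iff φ).2 hφ))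
  refine ⟨hφ, ?_⟩
  have hE : ¬ SLEAderiv X {ψ | .ess ψ ∈ Δ ∧ ψ ∈ Δ} φ := fun hder => by
    obtain ⟨C, ⟨hC₁, hC₂⟩, hCφ⟩ := hder.exists_thm_imp
      (And.intro (hΔ.thm_mem .axTop) (hΔ.thm_mem (.taut isTaut_topL)))
      (fun α (hα : _ ∧ _) β (hβ : _ ∧ _) => And.intro
        (hΔ.mem_of_imp_mem (hΔ.thm_mem (.con X α β)) (hΔ.and_mem_iff.2 ⟨hα.1, hβ.1⟩))
        (hΔ.and_mem_iff.2 ⟨hα.2, hβ.2⟩))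
    exact h (hΔ.mem_of_imp_mem (hΔ.thm_mem (.ruleR hCφ)) (hΔ.and_mem_iff.2 ⟨hC₁, hC₂⟩))
  obtain ⟨Θ, hEΘ, hΘ, hφΘ⟩ := exists_isMaximalConsistent_of_not_derives hE
  exact ⟨⟨Θ, hΘ⟩, fun ψ h₁ h₂ => hEΘ ⟨h₁, h₂⟩, hφΘ⟩

theorem satLEA_canonicalModel_iff (φ : LEAForm) (Δ : {Δ // IsMaximalConsistent X Δ}) :
    satLEA (canonicalModel X) Δ φ ↔ φ ∈ Δ.1 := by
  induction φ generalizing Δ with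
  | atom p => rfl
  | neg φ ih => simp only [satLEA, ih, Δ.2.neg_mem_iff]
  | and φ ψ ih₁ ih₂ => simp only [satLEA, ih₁, ih₂, Δ.2.and_mem_iff]
  | ess φ ih =>
    simp only [satLEA, ih]
    refine ⟨fun hsat => by_contra fun hess => ?_, fun hess hφ Θ hΔΘ => hΔΘ φ hess hφ⟩
    obtain ⟨hφ, Θ, hΔΘ, hφΘ⟩ := exists_canonicalModel_R_not_mem hess
    exact hφΘ (hsat hφ Θ hΔΘ)

end Canonical

section Soundness

variable {W : Type} (M : Model W)

theorem satLEA_impF {s : W} {φ ψ : LEAForm} :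
    satLEA M s (impF φ ψ) ↔ (satLEA M s φ → satLEA M s ψ) := by
  simp [impF, satLEA]

theorem satLEA_substL (σ : ℕ → LEAForm) (φ : LEAForm) (s : W) :
    satLEA M s (substL σ φ) ↔ satLEA ⟨M.R, fun p t => satLEA M t (σ p)⟩ s φ := by
  induction φ generalizing s <;> simp [substL, satLEA, *]

variable {M}

theorem SLEAthm.sound {φ : LEAForm} (h : SLEAthm ∅ φ) (s : W) : satLEA M s φ := by
  induction h generalizing W with
  | taut h =>
    classical
    exact of_decide_eq_true <| h (fun ψ => decide (satLEA M s ψ))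
      (fun _ => Bool.eq_iff_iff.2 (decide_eq_true_iff.trans (by simp [satLEA])))
      (fun _ _ => Bool.eq_iff_iff.2 (decide_eq_true_iff.trans (by simp [satLEA])))
  | axTop => exact fun _ _ _ => by simp [satLEA, topL]
  | axEqui => exact (satLEA_impF M).2 fun hp hp' => absurd hp' hp
  | axCon =>
    exact (satLEA_impF M).2 fun ⟨hp, hq⟩ ⟨hp', hq'⟩ t hst => ⟨hp hp' t hst, hq hq' t hst⟩
  | axExtra h => exact absurd h (Set.notMem_empty _)
  | sub σ _ ih => exact (satLEA_substL M σ _ s).2 (ih s)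
  | mp _ _ ih₁ ih₂ => exact (satLEA_impF M).1 (ih₁ s) (ih₂ s)
  | ruleR _ ih =>
    exact (satLEA_impF M).2 fun ⟨hess, hφ⟩ _ t hst => (satLEA_impF M).1 (ih t) (hess hφ t hst)

theorem SLEAderiv.sound {Γ : Set LEAForm} {φ : LEAForm} (h : SLEAderiv ∅ Γ φ) {s : W}
    (hΓ : ∀ γ ∈ Γ, satLEA M s γ) : satLEA M s φ := by
  induction h with
  | thm h => exact h.sound s
  | hyp h => exact hΓ _ h
  | mp _ _ ih₁ ih₂ => exact (satLEA_impF M).1 ih₁ ih₂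

end Soundness

theorem stmt18 (Γ : Set LEAForm) (φ : LEAForm) :
    SLEAderiv ∅ Γ φ ↔
      ∀ (W : Type) [Nonempty W] (M : Model W) (s : W),
        (∀ γ ∈ Γ, satLEA M s γ) → satLEA M s φ := by
  refine ⟨fun h W _ M s hΓ => h.sound hΓ, fun hsem => by_contra fun hφ => ?_⟩
  obtain ⟨Δ, hΓΔ, hΔ, hφΔ⟩ := exists_isMaximalConsistent_of_not_derives hφ
  have hsat := @hsem _ ⟨⟨Δ, hΔ⟩⟩ (canonicalModel ∅) ⟨Δ, hΔ⟩
    fun γ hγ => (satLEA_canonicalModel_iff γ _).2 (hΓΔ hγ)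
  exact hφΔ ((satLEA_canonicalModel_iff φ _).1 hsat)
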